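/- arXiv:1408.2303 — 5 statements merged into one kernel-verified Lean document; each statement's English description precedes it below -/
import Mathlib

section
/- Let g_1,...,g_n be F_q-linearly independent elements of F_{q^m} and r_1,...,r_n in F_{q^m}. Define recursively Pi_1(x) = x^q - g_1^{q-1} x, Lambda_1(x) = (r_1/g_1) x, and Pi_{i+1}(x) = Pi_i(x)^q - Pi_i(g_{i+1})^{q-1} Pi_i(x), Lambda_{i+1}(x) = Lambda_i(x) - ((Lambda_i(g_{i+1}) - r_{i+1})/Pi_i(g_{i+1})) Pi_i(x). Then Pi_i is the q-annihilator polynomial of span(g_1,...,g_i), and Lambda_i is the unique q-linearized polynomial of q-degree at most i-1 with Lambda_i(g_j) = r_j for j = 1,...,i. -/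
open Polynomial

/-- A `q`-linearized polynomial: all monomials have exponent a power of `q`. -/
def IsLin {F : Type*} [Field F] (q : ℕ) (f : Polynomial F) : Prop :=
  ∀ i ∈ f.support, ∃ j : ℕ, i = q ^ j

/-- Recursive construction of the `q`-annihilator polynomials:
`Π_1(x) = x^q - g_1^{q-1} x`, `Π_{i+1}(x) = Π_i(x)^q - Π_i(g_{i+1})^{q-1} Π_i(x)`
(0-indexed: `Pirec q g i` corresponds to `Π_{i+1}`). -/
noncomputable def Pirec {F : Type*} [Field F] (q : ℕ) (g : ℕ → F) : ℕ → Polynomial F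
  | 0 => X ^ q - C (g 0 ^ (q - 1)) * X
  | i + 1 => Pirec q g i ^ q - C ((Pirec q g i).eval (g (i + 1)) ^ (q - 1)) * Pirec q g i

/-- Recursive construction of the `q`-Lagrange polynomials:
`Λ_1(x) = (r_1/g_1) x`,
`Λ_{i+1}(x) = Λ_i(x) - ((Λ_i(g_{i+1}) - r_{i+1})/Π_i(g_{i+1})) Π_i(x)`
(0-indexed: `Lamrec q g r i` corresponds to `Λ_{i+1}`). -/
noncomputable def Lamrec {F : Type*} [Field F] (q : ℕ) (g r : ℕ → F) : ℕ → Polynomial F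
  | 0 => C (r 0 / g 0) * X
  | i + 1 => Lamrec q g r i -
      C (((Lamrec q g r i).eval (g (i + 1)) - r (i + 1)) / (Pirec q g i).eval (g (i + 1))) *
        Pirec q g i

/-! Over `F_q`, a `q`-linearized polynomial evaluates to an `F_q`-linear map, so `Π_i`, which
vanishes at `g_1, …, g_i` by construction, vanishes on their span `U_i`. That span has `q ^ i`
elements, the degree of the monic `Π_i`, hence `Π_i = ∏_{u ∈ U_i} (x - u)`; in particular
`Π_i(g_{i+1}) ≠ 0` because `g_{i+1} ∉ U_i`. The correction term of `Λ_{i+1}` is a multiple of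
`Π_i`, so it keeps the values at `g_1, …, g_i` and fixes the value at `g_{i+1}`. Two
interpolating linearized polynomials of degree at most `q ^ (i-1)` differ by one vanishing on
all `q ^ i` elements of `U_i`, so they coincide. -/

theorem Polynomial.eq_prod_X_sub_C_of_monic_of_natDegree_eq_card {R : Type*} [CommRing R]
    [IsDomain R] {P : R[X]} {S : Finset R} (hP : P.Monic) (hdeg : P.natDegree = S.card)
    (hroots : ∀ u ∈ S, P.eval u = 0) : P = ∏ u ∈ S, (X - C u) := by
  have hle : S.val ≤ P.roots :=
    (Multiset.le_iff_subset S.nodup).2 fun u hu => mem_roots'.2 ⟨hP.ne_zero, hroots u hu⟩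
  have hS : S.val = P.roots :=
    Multiset.eq_of_le_of_card_le hle (by simpa [hdeg] using P.card_roots')
  rw [← prod_multiset_X_sub_C_of_monic_of_roots_card_eq hP (by rw [← hS, hdeg]; rfl), ← hS]
  rfl

theorem LinearIndependent.linearIndepOn_Iic {R M : Type*} [Semiring R] [AddCommMonoid M]
    [Module R M] {n i : ℕ} {v : ℕ → M} (hv : LinearIndependent R fun k : Fin n => v k)
    (hi : i < n) : LinearIndepOn R v (Set.Iic i) :=
  hv.comp (fun k : Set.Iic i => ⟨k, lt_of_le_of_lt k.2 hi⟩) fun _ _ h =>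
    Subtype.ext (congrArg Fin.val h)

section IsLin

variable {F : Type*} [Field F] {q : ℕ} {f h : F[X]}

theorem isLin_X : IsLin q (X : F[X]) := by
  intro i hi
  rw [support_X, Finset.mem_singleton] at hi
  exact ⟨0, by rw [hi, pow_zero]⟩

theorem isLin_X_pow : IsLin q (X ^ q : F[X]) := by
  intro i hi
  rw [support_X_pow, Finset.mem_singleton] at hi
  exact ⟨1, by rw [hi, pow_one]⟩

theorem IsLin.sub (hf : IsLin q f) (hh : IsLin q h) : IsLin q (f - h) := by
  intro i hi
  rw [sub_eq_add_neg] at hi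
  rcases Finset.mem_union.1 (support_add hi) with hi | hi
  · exact hf i hi
  · exact hh i (by rwa [support_neg] at hi)

theorem IsLin.C_mul (c : F) (hf : IsLin q f) : IsLin q (C c * f) := by
  intro i hi
  rw [← smul_eq_C_mul] at hi
  exact hf i (support_smul c f hi)

theorem IsLin.pow_self {p n : ℕ} [ExpChar F p] (hf : IsLin (p ^ n) f) :
    IsLin (p ^ n) (f ^ p ^ n) := by
  intro i hi
  rw [← map_iterateFrobenius_expand] at hi
  have hi' := support_map_subset _ _ hi
  rw [mem_support_iff, coeff_expand (pow_pos (expChar_pos F p) n)] at hi'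
  split_ifs at hi' with hdvd
  · obtain ⟨j, hj⟩ := hf _ (mem_support_iff.2 hi')
    exact ⟨j + 1, by rw [← Nat.div_mul_cancel hdvd, hj, pow_succ]⟩
  · exact absurd rfl hi'

end IsLin

section FiniteField

variable {Fq F : Type*} [Field Fq] [Fintype Fq] [Field F] [Algebra Fq F]

theorem pow_card_pow_eq_frobeniusAlgHom_pow (j : ℕ) (x : F) :
    x ^ Fintype.card Fq ^ j = (FiniteField.frobeniusAlgHom Fq F ^ j) x := by
  rw [AlgHom.coe_pow, FiniteField.coe_frobeniusAlgHom, pow_iterate]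

variable (Fq) in
def IsLin.evalₗ {f : F[X]} (hf : IsLin (Fintype.card Fq) f) : F →ₗ[Fq] F where
  toFun x := f.eval x
  map_add' x y := by
    simp only [eval_eq_sum, Polynomial.sum, ← Finset.sum_add_distrib]
    refine Finset.sum_congr rfl fun i hi => ?_
    obtain ⟨j, rfl⟩ := hf i hi
    simp only [pow_card_pow_eq_frobeniusAlgHom_pow, map_add, mul_add]
  map_smul' c x := by
    simp only [eval_eq_sum, Polynomial.sum, Finset.smul_sum, RingHom.id_apply]
    refine Finset.sum_congr rfl fun i hi => ?_
    obtain ⟨j, rfl⟩ := hf i hi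
    simp only [pow_card_pow_eq_frobeniusAlgHom_pow, map_smul, mul_smul_comm]

theorem IsLin.eval_eq_zero_of_mem_span {f : F[X]} (hf : IsLin (Fintype.card Fq) f) {s : Set F}
    (hs : ∀ x ∈ s, f.eval x = 0) {x : F} (hx : x ∈ Submodule.span Fq s) : f.eval x = 0 :=
  Submodule.span_le (p := LinearMap.ker (hf.evalₗ Fq)).2 hs hx

theorem IsLin.pow_card {f : F[X]} (hf : IsLin (Fintype.card Fq) f) :
    IsLin (Fintype.card Fq) (f ^ Fintype.card Fq) := by
  obtain ⟨p, _, n, hp, hcard⟩ := FiniteField.card' Fq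
  have : CharP F p := charP_of_injective_algebraMap' Fq p
  have : ExpChar F p := .prime hp
  rw [hcard] at hf ⊢
  exact hf.pow_self

end FiniteField

section Recursion

variable {F : Type*} [Field F] {q : ℕ} (g r : ℕ → F)

theorem monic_Pirec_and_natDegree (hq : 1 < q) :
    ∀ i, (Pirec q g i).Monic ∧ (Pirec q g i).natDegree = q ^ (i + 1)
  | 0 => by
    have hlt : (C (g 0 ^ (q - 1)) * X).natDegree < (X ^ q : F[X]).natDegree := by
      rw [natDegree_X_pow]
      exact (natDegree_C_mul_le _ _).trans_lt (natDegree_X_le.trans_lt hq)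
    refine ⟨(monic_X_pow q).sub_of_left (degree_lt_degree hlt), ?_⟩
    rw [Pirec, natDegree_sub_eq_left_of_natDegree_lt hlt, natDegree_X_pow, zero_add, pow_one]
  | i + 1 => by
    obtain ⟨hmonic, hdeg⟩ := monic_Pirec_and_natDegree hq i
    have hlt : (C ((Pirec q g i).eval (g (i + 1)) ^ (q - 1)) * Pirec q g i).natDegree <
        (Pirec q g i ^ q).natDegree := by
      rw [natDegree_pow, hdeg]
      refine (natDegree_C_mul_le _ _).trans_lt ?_
      rw [hdeg]
      exact lt_mul_left (pow_pos (by omega) _) hq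
    refine ⟨(hmonic.pow q).sub_of_left (degree_lt_degree hlt), ?_⟩
    rw [Pirec, natDegree_sub_eq_left_of_natDegree_lt hlt, natDegree_pow, hdeg, ← pow_succ']

theorem eval_Pirec_eq_zero (hq : q ≠ 0) {i j : ℕ} (hj : j ≤ i) :
    (Pirec q g i).eval (g j) = 0 := by
  have hpow (y : F) : y ^ q - y ^ (q - 1) * y = 0 := by
    rw [← pow_succ, Nat.sub_add_cancel (Nat.one_le_iff_ne_zero.2 hq), sub_self]
  induction i with
  | zero =>
    rw [Nat.le_zero.1 hj]
    simpa [Pirec] using hpow (g 0)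
  | succ i ih =>
    simp only [Pirec, eval_sub, eval_pow, eval_mul, eval_C]
    rcases hj.lt_or_eq with hj | rfl
    · rw [ih (Nat.lt_succ_iff.1 hj), zero_pow hq, mul_zero, sub_zero]
    · exact hpow _

theorem natDegree_Lamrec_le (hq : 1 < q) : ∀ i, (Lamrec q g r i).natDegree ≤ q ^ i
  | 0 => (natDegree_C_mul_le _ _).trans (natDegree_X_le.trans (pow_zero q).ge)
  | i + 1 => (natDegree_sub_le _ _).trans <| max_le
      ((natDegree_Lamrec_le hq i).trans (Nat.pow_le_pow_right (by omega) i.le_succ))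
      ((natDegree_C_mul_le _ _).trans (monic_Pirec_and_natDegree g hq i).2.le)

theorem eval_Lamrec_of_eval_Pirec_ne_zero (hq : q ≠ 0) (hg0 : g 0 ≠ 0) {i : ℕ}
    (hPirec : ∀ k < i, (Pirec q g k).eval (g (k + 1)) ≠ 0) {j : ℕ} (hj : j ≤ i) :
    (Lamrec q g r i).eval (g j) = r j := by
  induction i generalizing j with
  | zero =>
    rw [Nat.le_zero.1 hj]
    simp [Lamrec, hg0]
  | succ i ih =>
    simp only [Lamrec, eval_sub, eval_mul, eval_C]
    rcases hj.lt_or_eq with hj | rfl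
    · rw [eval_Pirec_eq_zero g hq (Nat.lt_succ_iff.1 hj), mul_zero, sub_zero,
        ih (fun k hk => hPirec k (hk.trans i.lt_succ_self)) (Nat.lt_succ_iff.1 hj)]
    · rw [div_mul_cancel₀ _ (hPirec i i.lt_succ_self), sub_sub_cancel]

end Recursion

section Annihilator

variable {Fq F : Type*} [Field Fq] [Fintype Fq] [Field F] [Algebra Fq F] (g r : ℕ → F)

theorem isLin_Pirec : ∀ i, IsLin (Fintype.card Fq) (Pirec (Fintype.card Fq) g i)
  | 0 => isLin_X_pow.sub (isLin_X.C_mul _)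
  | i + 1 => (isLin_Pirec i).pow_card.sub ((isLin_Pirec i).C_mul _)

theorem isLin_Lamrec : ∀ i, IsLin (Fintype.card Fq) (Lamrec (Fintype.card Fq) g r i)
  | 0 => isLin_X.C_mul _
  | i + 1 => (isLin_Lamrec i).sub ((isLin_Pirec g i).C_mul _)

variable {g} {i : ℕ}

theorem card_span_image_Iic (hg : LinearIndepOn Fq g (Set.Iic i))
    (hs : (Submodule.span Fq (g '' Set.Iic i) : Set F).Finite) :
    hs.toFinset.card = Fintype.card Fq ^ (i + 1) := by
  have := Module.Finite.span_of_finite Fq ((Set.finite_Iic i).image g)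
  rw [← Set.ncard_eq_toFinset_card _ hs, ← Nat.card_coe_set_eq, SetLike.coe_sort_coe,
    Module.natCard_eq_pow_finrank (K := Fq), Nat.card_eq_fintype_card, Set.image_eq_range,
    finrank_span_eq_card (R := Fq) hg]
  simp

theorem Pirec_eq_prod_X_sub_C (hg : LinearIndepOn Fq g (Set.Iic i))
    (hs : (Submodule.span Fq (g '' Set.Iic i) : Set F).Finite) :
    Pirec (Fintype.card Fq) g i = ∏ u ∈ hs.toFinset, (X - C u) := by
  obtain ⟨hmonic, hdeg⟩ := monic_Pirec_and_natDegree g (Fintype.one_lt_card (α := Fq)) i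
  refine eq_prod_X_sub_C_of_monic_of_natDegree_eq_card hmonic
    (by rw [hdeg, card_span_image_Iic hg]) fun u hu => ?_
  refine (isLin_Pirec g i).eval_eq_zero_of_mem_span ?_ (hs.mem_toFinset.1 hu)
  rintro _ ⟨j, hj, rfl⟩
  exact eval_Pirec_eq_zero g Fintype.card_ne_zero hj

theorem eval_Pirec_ne_zero (hg : LinearIndepOn Fq g (Set.Iic (i + 1))) :
    (Pirec (Fintype.card Fq) g i).eval (g (i + 1)) ≠ 0 := by
  have hs := ((Set.finite_Iic i).image g).submoduleSpan Fq
  have hsub : Set.Iic i ⊆ Set.Iic (i + 1) := Set.Iic_subset_Iic.2 i.le_succ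
  have hnotMem : g (i + 1) ∉ Submodule.span Fq (g '' Set.Iic i) :=
    (hg.mono hsub).notMem_span_iff.2
      ⟨hg.mono (Set.insert_subset (Set.mem_Iic.2 le_rfl) hsub), by simp⟩
  rw [Pirec_eq_prod_X_sub_C (hg.mono hsub) hs, eval_prod, Finset.prod_ne_zero_iff]
  intro u hu
  rw [eval_sub, eval_X, eval_C, sub_ne_zero]
  rintro rfl
  exact hnotMem (hs.mem_toFinset.1 hu)

theorem eval_Lamrec (hg : LinearIndepOn Fq g (Set.Iic i)) {j : ℕ} (hj : j ≤ i) :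
    (Lamrec (Fintype.card Fq) g r i).eval (g j) = r j :=
  eval_Lamrec_of_eval_Pirec_ne_zero g r Fintype.card_ne_zero
    (fun h0 => hg.zero_notMem_image ⟨0, Nat.zero_le i, h0⟩)
    (fun _ hk => eval_Pirec_ne_zero (hg.mono (Set.Iic_subset_Iic.2 hk))) hj

theorem IsLin.eq_of_eval_eq (hg : LinearIndepOn Fq g (Set.Iic i)) {L M : F[X]}
    (hL : IsLin (Fintype.card Fq) L) (hM : IsLin (Fintype.card Fq) M)
    (hLdeg : L.natDegree ≤ Fintype.card Fq ^ i) (hMdeg : M.natDegree ≤ Fintype.card Fq ^ i)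
    (heq : ∀ j ≤ i, L.eval (g j) = M.eval (g j)) : L = M := by
  have hs := ((Set.finite_Iic i).image g).submoduleSpan Fq
  have hlt : Fintype.card Fq ^ i < hs.toFinset.card := by
    rw [card_span_image_Iic hg]
    exact Nat.pow_lt_pow_right (Fintype.one_lt_card (α := Fq)) i.lt_succ_self
  refine eq_of_natDegree_lt_card_of_eval_eq' L M hs.toFinset (fun x hx => ?_)
    ((max_le hLdeg hMdeg).trans_lt hlt)
  rw [← sub_eq_zero, ← eval_sub]
  refine (hL.sub hM).eval_eq_zero_of_mem_span ?_ (hs.mem_toFinset.1 hx)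
  rintro _ ⟨j, hj, rfl⟩
  rw [eval_sub, heq j hj, sub_self]

end Annihilator

/-- For `Fq`-linearly independent `g 0, ..., g (n-1)` in the finite field `F` and any `r`:
for each `i < n`, `Pirec q g i` is the `q`-annihilator polynomial of the span of
`g 0, ..., g i`, and `Lamrec q g r i` is the unique `q`-linearized polynomial of
`q`-degree at most `i` (i.e. degree at most `q ^ i`) with `Λ(g j) = r j` for `j ≤ i`. -/
theorem stmt4 {Fq F : Type*} [Field Fq] [Fintype Fq] [Field F] [Fintype F] [Algebra Fq F]
    {n : ℕ} (g r : ℕ → F) (hg : LinearIndependent Fq (fun i : Fin n => g i)) :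
    ∀ i : ℕ, i < n →
      (Pirec (Fintype.card Fq) g i =
        ∏ u ∈ (Set.toFinite ((Submodule.span Fq (g '' Set.Iic i) : Submodule Fq F) : Set F)).toFinset,
          (X - C u)) ∧
      IsLin (Fintype.card Fq) (Lamrec (Fintype.card Fq) g r i) ∧
      (Lamrec (Fintype.card Fq) g r i).natDegree ≤ Fintype.card Fq ^ i ∧
      (∀ j ≤ i, (Lamrec (Fintype.card Fq) g r i).eval (g j) = r j) ∧
      (∀ L : Polynomial F, IsLin (Fintype.card Fq) L →
        L.natDegree ≤ Fintype.card Fq ^ i → (∀ j ≤ i, L.eval (g j) = r j) →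
        L = Lamrec (Fintype.card Fq) g r i) := by
  intro i hi
  have hgi := hg.linearIndepOn_Iic hi
  have hdeg := natDegree_Lamrec_le g r (Fintype.one_lt_card (α := Fq)) i
  refine ⟨Pirec_eq_prod_X_sub_C hgi _, isLin_Lamrec g r i, hdeg, fun j hj => eval_Lamrec r hgi hj,
    fun L hL hLdeg hval => hL.eq_of_eval_eq hgi (isLin_Lamrec g r i) hLdeg hdeg fun j hj => ?_⟩
  rw [hval j hj, eval_Lamrec r hgi hj]
end

section
/- Let g_1,...,g_n in F_{q^m} be F_q-linearly independent. The Gabidulin code C = {(m(g_1),...,m(g_n)) : m a q-linearized polynomial over F_{q^m} of q-degree < k} (for k <= n) has F_{q^m}-dimension k and minimum rank distance n - k + 1. -/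
open Polynomial

/-- The rank weight of a vector over the extension field: the `Fq`-dimension of the
span of its coordinates (equivalently, the `Fq`-rank of the associated matrix). -/
noncomputable def rankW (Fq : Type*) {F : Type*} [Field Fq] [Field F] [Algebra Fq F]
    {n : ℕ} (v : Fin n → F) : ℕ :=
  Module.finrank Fq (Submodule.span Fq (Set.range v))

/-!
A coefficient vector `a : Fin k → F` gives the `q`-linearized polynomial `∑ a j X^(q^j)`, which
acts `Fq`-linearly on `F` because `x ↦ x^q` is the Frobenius; the code is the image of
`a ↦ (p_a (g i))_i`, that is, of the Moore matrix. A nonzero `p_a` has at most `q^(k-1)` roots,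
so its `Fq`-kernel has dimension at most `k - 1`, and rank–nullity on `span g` bounds the rank
weight of its codeword below by `n - k + 1`; in particular the encoding is injective. Counting
dimensions gives a nonzero `a` whose polynomial vanishes at the first `k - 1` points `g i`, and
a codeword with at most `n - k + 1` nonzero coordinates has rank weight at most `n - k + 1`.
-/

open Module Matrix

section LinearizedPoly

variable {F : Type*} [Field F] {q k : ℕ}

noncomputable def linearizedPoly (q : ℕ) (a : Fin k → F) : F[X] :=
  ∑ j : Fin k, monomial (q ^ (j : ℕ)) (a j)

lemma coeff_linearizedPoly (a : Fin k → F) (e : ℕ) :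
    (linearizedPoly q a).coeff e = ∑ j : Fin k, if q ^ (j : ℕ) = e then a j else 0 := by
  simp only [linearizedPoly, finsetSum_coeff, coeff_monomial]

lemma coeff_linearizedPoly_pow (hq : 1 < q) (a : Fin k → F) (j : Fin k) :
    (linearizedPoly q a).coeff (q ^ (j : ℕ)) = a j := by
  rw [coeff_linearizedPoly, Finset.sum_eq_single j (fun i _ hij => if_neg fun h =>
    hij (Fin.ext (Nat.pow_right_injective hq h))) (by simp), if_pos rfl]

lemma isLin_linearizedPoly (a : Fin k → F) : IsLin q (linearizedPoly q a) := by
  intro e he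
  by_contra! hne
  refine mem_support_iff.mp he ?_
  rw [coeff_linearizedPoly]
  exact Finset.sum_eq_zero fun j _ => if_neg fun h => hne j h.symm

lemma natDegree_linearizedPoly_le (hq : 0 < q) (a : Fin k → F) :
    (linearizedPoly q a).natDegree ≤ q ^ (k - 1) :=
  natDegree_sum_le_of_forall_le _ _ fun j _ =>
    (natDegree_monomial_le _).trans (Nat.pow_le_pow_right hq (by omega))

lemma natDegree_linearizedPoly_lt (hq : 1 < q) (a : Fin k → F) :
    (linearizedPoly q a).natDegree < q ^ k := by
  rcases k.eq_zero_or_pos with rfl | hk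
  · simp [linearizedPoly]
  exact (natDegree_linearizedPoly_le hq.le a).trans_lt (Nat.pow_lt_pow_right hq (by omega))

lemma eval_linearizedPoly (a : Fin k → F) (x : F) :
    (linearizedPoly q a).eval x = ∑ j, a j * x ^ q ^ (j : ℕ) := by
  simp [linearizedPoly, eval_finsetSum]

lemma linearizedPoly_ne_zero (hq : 1 < q) {a : Fin k → F} (ha : a ≠ 0) :
    linearizedPoly q a ≠ 0 := by
  contrapose! ha
  funext j
  rw [← coeff_linearizedPoly_pow hq a, ha, coeff_zero, Pi.zero_apply]

lemma eq_linearizedPoly_of_isLin (hq : 1 < q) {p : F[X]} (hlin : IsLin q p)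
    (hdeg : p.natDegree < q ^ k) :
    p = linearizedPoly q (fun j : Fin k => p.coeff (q ^ (j : ℕ))) := by
  ext e
  by_cases he : p.coeff e = 0
  · rw [he, coeff_linearizedPoly]
    exact (Finset.sum_eq_zero fun j _ => by split_ifs with h <;> simp [h, he]).symm
  obtain ⟨j, rfl⟩ := hlin e (mem_support_iff.mpr he)
  have hj : j < k := (Nat.pow_lt_pow_iff_right hq).mp ((le_natDegree_of_ne_zero he).trans_lt hdeg)
  exact (coeff_linearizedPoly_pow hq (fun i : Fin k => p.coeff (q ^ (i : ℕ))) ⟨j, hj⟩).symm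

end LinearizedPoly

section FrobeniusLinear

variable (Fq : Type*) {F : Type*} [Field Fq] [Fintype Fq] [Field F] [Algebra Fq F] {k : ℕ}

noncomputable def linearizedMap (a : Fin k → F) : F →ₗ[Fq] F :=
  ∑ j, a j • ((FiniteField.frobeniusAlgHom Fq F) ^ (j : ℕ)).toLinearMap

lemma linearizedMap_apply (a : Fin k → F) (x : F) :
    linearizedMap Fq a x = (linearizedPoly (Fintype.card Fq) a).eval x := by
  simp [linearizedMap, eval_linearizedPoly, AlgHom.coe_pow, FiniteField.coe_frobeniusAlgHom,
    pow_iterate]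

lemma finrank_ker_linearizedMap_le [Finite F] {a : Fin k → F} (ha : a ≠ 0) :
    finrank Fq (LinearMap.ker (linearizedMap Fq a)) ≤ k - 1 := by
  classical
  have hq : 1 < Fintype.card Fq := Fintype.one_lt_card
  set p := linearizedPoly (Fintype.card Fq) a
  have hker : (LinearMap.ker (linearizedMap Fq a) : Set F) ⊆ p.roots.toFinset := fun x hx => by
    rw [SetLike.mem_coe, LinearMap.mem_ker, linearizedMap_apply] at hx
    exact Multiset.mem_toFinset.mpr (mem_roots'.mpr ⟨linearizedPoly_ne_zero hq ha, hx⟩)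
  have hcard : Fintype.card Fq ^ finrank Fq (LinearMap.ker (linearizedMap Fq a)) ≤
      Fintype.card Fq ^ (k - 1) := calc
    _ = Nat.card (LinearMap.ker (linearizedMap Fq a)) := by
      rw [Module.natCard_eq_pow_finrank (K := Fq), Nat.card_eq_fintype_card]
    _ ≤ p.roots.toFinset.card :=
      (Nat.card_coe_set_eq _).trans_le ((Set.ncard_le_ncard hker).trans_eq (Set.ncard_coe_finset _))
    _ ≤ p.natDegree := (Multiset.toFinset_card_le _).trans (card_roots' p)
    _ ≤ _ := natDegree_linearizedPoly_le hq.le a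
  exact (Nat.pow_le_pow_iff_right hq).mp hcard

end FrobeniusLinear

section RankWeight

variable {K L : Type*} [Field K] [Field L] [Algebra K L] {n : ℕ}

lemma rankW_zero : rankW K (0 : Fin n → L) = 0 := by
  rw [rankW, Submodule.span_eq_bot.mpr (by rintro _ ⟨i, rfl⟩; rfl), finrank_bot]

lemma rankW_le_sub_card_of_eq_zero (v : Fin n → L) (s : Finset (Fin n))
    (hs : ∀ i ∈ s, v i = 0) : rankW K v ≤ n - s.card := by
  classical
  have hspan : Submodule.span K (Set.range v) ≤ Submodule.span K ↑(sᶜ.image v) := by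
    rw [Submodule.span_le]
    rintro _ ⟨i, rfl⟩
    by_cases hi : i ∈ s
    · rw [hs i hi]
      exact zero_mem _
    · exact Submodule.subset_span (Finset.mem_image_of_mem v (Finset.mem_compl.mpr hi))
  calc rankW K v ≤ finrank K (Submodule.span K ↑(sᶜ.image v)) := Submodule.finrank_mono hspan
    _ ≤ (sᶜ.image v).card := by exact finrank_span_finset_le_card _
    _ ≤ sᶜ.card := Finset.card_image_le
    _ = n - s.card := by rw [Finset.card_compl, Fintype.card_fin]

lemma rankW_comp_add_finrank_ker {g : Fin n → L} (hg : LinearIndependent K g)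
    (f : L →ₗ[K] L) : rankW K (f ∘ g) +
      finrank K (LinearMap.ker (f.domRestrict (Submodule.span K (Set.range g)))) = n := by
  have := FiniteDimensional.span_of_finite K (Set.finite_range g)
  rw [rankW, Set.range_comp, ← Submodule.map_span, ← LinearMap.range_domRestrict,
    LinearMap.finrank_range_add_finrank_ker, finrank_span_eq_card hg, Fintype.card_fin]

lemma sub_finrank_ker_le_rankW_comp [FiniteDimensional K L] {g : Fin n → L}
    (hg : LinearIndependent K g) (f : L →ₗ[K] L) :
    n - finrank K (LinearMap.ker f) ≤ rankW K (f ∘ g) := by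
  have hker : finrank K (LinearMap.ker (f.domRestrict (Submodule.span K (Set.range g)))) ≤
      finrank K (LinearMap.ker f) := by
    rw [LinearMap.ker_domRestrict, ← Submodule.finrank_map_subtype_eq]
    exact Submodule.finrank_mono (Submodule.map_comap_le _ _)
  have := rankW_comp_add_finrank_ker hg f
  omega

end RankWeight

section Gabidulin

variable {Fq F : Type*} [Field Fq] [Fintype Fq] [Field F] [Algebra Fq F] {n k : ℕ}

def mooreMatrix (q k : ℕ) (g : Fin n → F) : Matrix (Fin n) (Fin k) F :=
  Matrix.of fun i j => g i ^ q ^ (j : ℕ)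

lemma mooreMatrix_mulVec (g : Fin n → F) (a : Fin k → F) :
    mooreMatrix (Fintype.card Fq) k g *ᵥ a = linearizedMap Fq a ∘ g := by
  ext i
  simp [Matrix.mulVec, dotProduct, mooreMatrix, linearizedMap_apply, eval_linearizedPoly,
    mul_comm]

variable [Finite F]

lemma le_rankW_mooreMatrix_mulVec (hkn : k ≤ n) {g : Fin n → F} (hg : LinearIndependent Fq g)
    {a : Fin k → F} (ha : a ≠ 0) :
    n - k + 1 ≤ rankW Fq (mooreMatrix (Fintype.card Fq) k g *ᵥ a) := by
  have hk : 0 < k := Nat.pos_of_ne_zero (by rintro rfl; exact ha (Subsingleton.elim _ _))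
  have h1 := sub_finrank_ker_le_rankW_comp hg (linearizedMap Fq a)
  have h2 := finrank_ker_linearizedMap_le Fq ha
  rw [mooreMatrix_mulVec]
  omega

lemma mooreMatrix_mulVec_injective (hkn : k ≤ n) {g : Fin n → F} (hg : LinearIndependent Fq g) :
    Function.Injective (mooreMatrix (Fintype.card Fq) k g).mulVecLin := by
  rw [← LinearMap.ker_eq_bot, LinearMap.ker_eq_bot']
  intro a ha
  by_contra ha0
  have := le_rankW_mooreMatrix_mulVec hkn hg ha0
  rw [Matrix.mulVecLin_apply] at ha
  rw [ha, rankW_zero] at this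
  omega

lemma exists_rankW_mooreMatrix_mulVec_eq (hk : 0 < k) (hkn : k ≤ n) {g : Fin n → F}
    (hg : LinearIndependent Fq g) : ∃ a : Fin k → F, a ≠ 0 ∧
      rankW Fq (mooreMatrix (Fintype.card Fq) k g *ᵥ a) = n - k + 1 := by
  set M := mooreMatrix (Fintype.card Fq) k g
  have hk1 : k - 1 ≤ n := by omega
  -- `k` coefficients, `k - 1` linear conditions: vanish at the first `k - 1` points
  have hker : LinearMap.ker (LinearMap.funLeft F F (Fin.castLE hk1) ∘ₗ M.mulVecLin) ≠ ⊥ :=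
    LinearMap.ker_ne_bot_of_finrank_lt (by simp; omega)
  obtain ⟨a, ha, ha0⟩ := Submodule.exists_mem_ne_zero_of_ne_bot hker
  refine ⟨a, ha0, le_antisymm ?_ (le_rankW_mooreMatrix_mulVec hkn hg ha0)⟩
  have hvan : ∀ i ∈ Finset.univ.map (Fin.castLEEmb hk1), (M *ᵥ a) i = 0 := by
    simp only [Finset.mem_map, Finset.mem_univ, true_and]
    rintro _ ⟨i, rfl⟩
    exact congrFun ha i
  have := rankW_le_sub_card_of_eq_zero (K := Fq) _ _ hvan
  rw [Finset.card_map, Finset.card_univ, Fintype.card_fin] at this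
  omega

end Gabidulin

/-- The Gabidulin code `C = {(m(g 0),...,m(g (n-1))) : m q-linearized, qdeg m < k}`
with `Fq`-linearly independent generators `g` is an `F`-linear subspace of `F^n`
of `F`-dimension `k` and minimum rank distance `n - k + 1`. -/
theorem stmt8 {Fq F : Type*} [Field Fq] [Fintype Fq] [Field F] [Fintype F] [Algebra Fq F]
    {n k : ℕ} (hk : 0 < k) (hkn : k ≤ n) (g : Fin n → F) (hg : LinearIndependent Fq g) :
    ∃ Cc : Submodule F (Fin n → F),
      (Cc : Set (Fin n → F)) =
        {c | ∃ p : Polynomial F, IsLin (Fintype.card Fq) p ∧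
          p.natDegree < Fintype.card Fq ^ k ∧ c = fun i => p.eval (g i)} ∧
      Module.finrank F Cc = k ∧
      (∀ c ∈ Cc, c ≠ 0 → n - k + 1 ≤ rankW Fq c) ∧
      (∃ c ∈ Cc, c ≠ 0 ∧ rankW Fq c = n - k + 1) := by
  have hq : 1 < Fintype.card Fq := Fintype.one_lt_card
  set M := mooreMatrix (Fintype.card Fq) k g
  refine ⟨LinearMap.range M.mulVecLin, ?_, ?_, ?_, ?_⟩
  · ext c
    constructor
    · rintro ⟨a, rfl⟩
      refine ⟨_, isLin_linearizedPoly a, natDegree_linearizedPoly_lt hq a, ?_⟩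
      rw [Matrix.mulVecLin_apply, mooreMatrix_mulVec]
      exact funext fun i => linearizedMap_apply Fq a (g i)
    · rintro ⟨p, hlin, hdeg, rfl⟩
      refine ⟨fun j : Fin k => p.coeff (Fintype.card Fq ^ (j : ℕ)), funext fun i => ?_⟩
      rw [Matrix.mulVecLin_apply, mooreMatrix_mulVec, Function.comp_apply, linearizedMap_apply,
        ← eq_linearizedPoly_of_isLin hq hlin hdeg]
  · rw [LinearMap.finrank_range_of_inj (mooreMatrix_mulVec_injective hkn hg),
      Module.finrank_fin_fun]
  · rintro _ ⟨a, rfl⟩ hc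
    exact le_rankW_mooreMatrix_mulVec hkn hg fun ha => hc (by rw [ha, map_zero])
  · obtain ⟨a, ha0, ha⟩ := exists_rankW_mooreMatrix_mulVec_eq hk hkn hg
    refine ⟨M *ᵥ a, ⟨a, rfl⟩, fun h => ?_, ha⟩
    rw [h, rankW_zero] at ha
    omega
end

section
/- Let M be a left submodule of L_q(x,q^m)^l with a minimal basis B = {b^(1),...,b^(L)} with respect to a fixed monomial order. For any nonzero f in M written as f = sum_i a_i(x) composed with b^(i), the leading monomial of f equals max over i with a_i nonzero of lm(a_i) composed with lm(b^(i)). -/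
open Polynomial

/-- A vector of `q`-linearized polynomials. -/
def IsLinVec {F : Type*} [Field F] (q : ℕ) {l : ℕ} (f : Fin l → Polynomial F) : Prop :=
  ∀ i, IsLin q (f i)

/-- A monomial `x^{q^k} e_pos` of `L_q(x,q^m)^l`. -/
structure Mon (l : ℕ) where
  k : ℕ
  pos : Fin l

/-- `lt` is a monomial order on `L_q(x,q^m)^l`: a total (strict) order such that
left composition by `x^{q^j}` (which sends `x^{q^k} e_i` to `x^{q^{j+k}} e_i`)
increases monomials (for `j > 0`) and preserves the order. -/
structure IsMonOrder {l : ℕ} (lt : Mon l → Mon l → Prop) : Prop where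
  irrefl : ∀ m, ¬ lt m m
  trans : ∀ a b c, lt a b → lt b c → lt a c
  total : ∀ a b, lt a b ∨ a = b ∨ lt b a
  comp_gt : ∀ (m : Mon l) (j : ℕ), 0 < j → lt m ⟨j + m.k, m.pos⟩
  comp_mono : ∀ (m1 m2 : Mon l) (j : ℕ), lt m1 m2 → lt ⟨j + m1.k, m1.pos⟩ ⟨j + m2.k, m2.pos⟩

/-- The monomial `x^{q^k} e_pos` occurs in `f`. -/
def MonOf {F : Type*} [Field F] (q : ℕ) {l : ℕ} (f : Fin l → Polynomial F)
    (mo : Mon l) : Prop :=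
  q ^ mo.k ∈ (f mo.pos).support

/-- `mo` is the leading monomial of `f` with respect to the monomial order `lt`. -/
def IsLM {F : Type*} [Field F] (q : ℕ) {l : ℕ} (lt : Mon l → Mon l → Prop)
    (f : Fin l → Polynomial F) (mo : Mon l) : Prop :=
  MonOf q f mo ∧ ∀ mo', MonOf q f mo' → mo' = mo ∨ lt mo' mo

/-- `M` is a left submodule of `L_q(x,q^m)^l` over the ring of `q`-linearized
polynomials with composition. -/
def IsLinSubmodule {F : Type*} [Field F] (q : ℕ) {l : ℕ}
    (M : Set (Fin l → Polynomial F)) : Prop :=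
  (∀ f ∈ M, IsLinVec q f) ∧ ((fun _ => 0) ∈ M) ∧
  (∀ f ∈ M, ∀ g ∈ M, (fun j => f j + g j) ∈ M) ∧
  (∀ a : Polynomial F, IsLin q a → ∀ f ∈ M, (fun j => a.comp (f j)) ∈ M)

/-- `B` is a basis of `M`: its members lie in `M`, generate `M` by left combinations
`∑ aᵢ ∘ bᵢ` with `q`-linearized coefficients, and are linearly independent. -/
def IsBasisOf {F : Type*} [Field F] (q : ℕ) {l : ℕ} {ι : Type*} [Fintype ι]
    (M : Set (Fin l → Polynomial F)) (B : ι → Fin l → Polynomial F) : Prop :=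
  (∀ i, B i ∈ M) ∧
  (∀ f ∈ M, ∃ a : ι → Polynomial F, (∀ i, IsLin q (a i)) ∧
    f = fun j => ∑ i, (a i).comp (B i j)) ∧
  (∀ a : ι → Polynomial F, (∀ i, IsLin q (a i)) →
    ((fun j => ∑ i, (a i).comp (B i j)) = fun _ => (0 : Polynomial F)) → ∀ i, a i = 0)


/-!
If `q` is a power of the characteristic exponent `p` of `F`, then `g ^ q ^ e` is the
`q ^ e`-th Frobenius twist of `g` expanded by `q ^ e`, so the `q ^ k`-coefficient of `a ∘ g`
for a linearized `a` is `∑_{e ≤ k} a_{q^e} · g_{q^{k-e}} ^ {q^e}`. Hence the top coefficient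
of `a ∘ b` sits exactly at `lm(a) ∘ lm(b)` and nothing larger occurs:
`lm(a ∘ b) = lm(a) ∘ lm(b)`. In a sum of vectors whose leading monomials are pairwise distinct,
the largest of them appears in exactly one summand and cannot cancel. Minimality of the basis
makes the positions, hence the leading monomials `lm(aᵢ) ∘ lm(bᵢ)`, pairwise distinct.
-/

section ExpChar

variable {R : Type*} [CommSemiring R] {p : ℕ} [ExpChar R p]

theorem Polynomial.coeff_pow_expChar_pow (f : R[X]) (n m : ℕ) :
    (f ^ p ^ n).coeff m = if p ^ n ∣ m then f.coeff (m / p ^ n) ^ p ^ n else 0 := by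
  rw [← map_iterateFrobenius_expand, coeff_map, coeff_expand (expChar_pow_pos R p n)]
  split_ifs
  · rw [iterateFrobenius_def]
  · rw [map_zero]

theorem Polynomial.coeff_pow_pow_pow_of_le {q s : ℕ} (hq : q = p ^ s) (f : R[X]) {e k : ℕ}
    (hek : e ≤ k) : (f ^ q ^ e).coeff (q ^ k) = f.coeff (q ^ (k - e)) ^ q ^ e := by
  have hq0 : 0 < q := hq ▸ expChar_pow_pos R p s
  rw [hq, ← pow_mul, coeff_pow_expChar_pow, pow_mul, ← hq,
    if_pos (pow_dvd_pow q hek), Nat.pow_div hek hq0]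

theorem Polynomial.coeff_pow_pow_pow_of_lt {q s : ℕ} (hq : q = p ^ s) (hq1 : 1 < q) (f : R[X])
    {e k : ℕ} (hke : k < e) : (f ^ q ^ e).coeff (q ^ k) = 0 := by
  rw [hq, ← pow_mul, coeff_pow_expChar_pow, pow_mul, ← hq,
    if_neg (by rw [Nat.pow_dvd_pow_iff_le_right hq1]; omega)]

end ExpChar

theorem Polynomial.coeff_comp_eq_sum {R : Type*} [CommSemiring R] (a g : R[X]) (m : ℕ) :
    (a.comp g).coeff m = ∑ n ∈ a.support, a.coeff n * (g ^ n).coeff m := by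
  simp [comp_eq_sum_left, Polynomial.sum, finsetSum_coeff, coeff_C_mul]

namespace IsLin

variable {F : Type*} [Field F] {p q s : ℕ} [ExpChar F p] {a : F[X]}

theorem exists_coeff_ne_zero_of_coeff_comp_ne_zero (hq : q = p ^ s) (hq1 : 1 < q)
    (ha : IsLin q a) (g : F[X]) {k : ℕ} (h : (a.comp g).coeff (q ^ k) ≠ 0) :
    ∃ e t, e + t = k ∧ a.coeff (q ^ e) ≠ 0 ∧ g.coeff (q ^ t) ≠ 0 := by
  rw [coeff_comp_eq_sum] at h
  obtain ⟨n, hn, hterm⟩ := Finset.exists_ne_zero_of_sum_ne_zero h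
  obtain ⟨e, rfl⟩ := ha n hn
  have hg : (g ^ q ^ e).coeff (q ^ k) ≠ 0 := right_ne_zero_of_mul hterm
  have hek : e ≤ k := by
    by_contra! hke
    exact hg (coeff_pow_pow_pow_of_lt hq hq1 g hke)
  rw [coeff_pow_pow_pow_of_le hq g hek] at hg
  exact ⟨e, k - e, by omega, left_ne_zero_of_mul hterm, ne_zero_pow (by positivity) hg⟩

theorem coeff_comp_pow_add (hq : q = p ^ s) (hq1 : 1 < q) (ha : IsLin q a) {d : ℕ}
    (hd : a.natDegree = q ^ d) {g : F[X]} {k : ℕ} (hg : ∀ t, k < t → g.coeff (q ^ t) = 0) :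
    (a.comp g).coeff (q ^ (d + k)) = a.leadingCoeff * g.coeff (q ^ k) ^ q ^ d := by
  rw [coeff_comp_eq_sum, Finset.sum_eq_single (q ^ d), leadingCoeff, hd,
    coeff_pow_pow_pow_of_le hq g (Nat.le_add_right d k), Nat.add_sub_cancel_left]
  · intro n hn hnd
    obtain ⟨e, rfl⟩ := ha n hn
    have hed : e < d := by
      have := le_natDegree_of_mem_supp _ hn
      rw [hd, Nat.pow_le_pow_iff_right hq1] at this
      exact lt_of_le_of_ne this (by rintro rfl; exact hnd rfl)
    rw [coeff_pow_pow_pow_of_le hq g (by omega), hg _ (by omega),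
      zero_pow (by positivity), mul_zero]
  · intro hd0
    rw [notMem_support_iff.mp hd0, zero_mul]

end IsLin

/-- The monomial `x^{q^j} ∘ m`. -/
def Mon.shift {l : ℕ} (j : ℕ) (m : Mon l) : Mon l := ⟨j + m.k, m.pos⟩

namespace IsMonOrder

variable {l : ℕ}

theorem isStrictTotalOrder {lt : Mon l → Mon l → Prop} (h : IsMonOrder lt) :
    IsStrictTotalOrder (Mon l) lt where
  irrefl := h.irrefl
  trans := h.trans
  trichotomous a b hab hba := (h.total a b).resolve_left hab |>.resolve_right hba

/-- Its `≤` is `fun x y => x = y ∨ lt x y`, the comparison used in `IsLM`. -/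
noncomputable abbrev toLinearOrder {lt : Mon l → Mon l → Prop} (h : IsMonOrder lt) :
    LinearOrder (Mon l) :=
  haveI := h.isStrictTotalOrder
  haveI := Classical.decRel lt
  linearOrderOfSTO lt

variable [LinearOrder (Mon l)] (h : IsMonOrder ((· < ·) : Mon l → Mon l → Prop))
include h

theorem shift_le_shift {m m' : Mon l} (hm : m ≤ m') (j : ℕ) : m.shift j ≤ m'.shift j := by
  rcases hm.eq_or_lt with rfl | hlt
  · exact le_rfl
  · exact (h.comp_mono m m' j hlt).le

theorem lt_shift (m : Mon l) {j : ℕ} (hj : 0 < j) : m < m.shift j :=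
  h.comp_gt m j hj

theorem shift_le_shift_of_le (m : Mon l) {i j : ℕ} (hij : i ≤ j) : m.shift i ≤ m.shift j := by
  rcases hij.eq_or_lt with rfl | hlt
  · exact le_rfl
  · have : (m.shift i).shift (j - i) = m.shift j := by
      simp only [Mon.shift, Mon.mk.injEq, and_true]; omega
    exact this ▸ (h.lt_shift (m.shift i) (by omega)).le

end IsMonOrder

namespace IsLM

variable {F : Type*} [Field F] {q l : ℕ} [LinearOrder (Mon l)]

theorem le {f : Fin l → F[X]} {m m' : Mon l} (hf : IsLM q (· < ·) f m) (hm' : MonOf q f m') :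
    m' ≤ m :=
  le_iff_eq_or_lt.2 (hf.2 m' hm')

theorem coeff_eq_zero_of_lt (h : IsMonOrder ((· < ·) : Mon l → Mon l → Prop))
    {f : Fin l → F[X]} {m : Mon l} (hf : IsLM q (· < ·) f m) {t : ℕ} (ht : m.k < t) :
    (f m.pos).coeff (q ^ t) = 0 := by
  by_contra hne
  have hshift : m.shift (t - m.k) = ⟨t, m.pos⟩ := by
    simp only [Mon.shift, Mon.mk.injEq, and_true]; omega
  have hle : m.shift (t - m.k) ≤ m := hshift ▸ hf.le (mem_support_iff.mpr hne)
  exact hle.not_gt (h.lt_shift m (by omega))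

theorem comp {p s : ℕ} [ExpChar F p] (h : IsMonOrder ((· < ·) : Mon l → Mon l → Prop))
    (hq : q = p ^ s) (hq1 : 1 < q) {b : Fin l → F[X]} {mb : Mon l} (hb : IsLM q (· < ·) b mb)
    {a : F[X]} (ha : IsLin q a) {d : ℕ} (hd : a.natDegree = q ^ d) :
    IsLM q (· < ·) (fun j => a.comp (b j)) (mb.shift d) := by
  have ha0 : a ≠ 0 := by
    rintro rfl
    exact (pow_pos (zero_lt_one.trans hq1) d).ne' hd.symm
  refine ⟨?_, fun mo hmo => le_iff_eq_or_lt.1 ?_⟩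
  · show q ^ (d + mb.k) ∈ (a.comp (b mb.pos)).support
    rw [mem_support_iff, ha.coeff_comp_pow_add hq hq1 hd fun t ht => hb.coeff_eq_zero_of_lt h ht]
    exact mul_ne_zero (leadingCoeff_ne_zero.mpr ha0) (pow_ne_zero _ (mem_support_iff.mp hb.1))
  · obtain ⟨e, t, het, hae, hbt⟩ :=
      ha.exists_coeff_ne_zero_of_coeff_comp_ne_zero hq hq1 (b mo.pos) (mem_support_iff.mp hmo)
    have hed : e ≤ d := by
      rw [← Nat.pow_le_pow_iff_right hq1, ← hd]
      exact le_natDegree_of_ne_zero hae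
    calc mo = (⟨t, mo.pos⟩ : Mon l).shift e := by simp only [Mon.shift, het]
      _ ≤ mb.shift e := h.shift_le_shift (hb.le (mem_support_iff.mpr hbt)) e
      _ ≤ mb.shift d := h.shift_le_shift_of_le mb hed

theorem sum {ι : Type*} {s : Finset ι} (hs : s.Nonempty) {v : ι → Fin l → F[X]} {c : ι → Mon l}
    (hv : ∀ i ∈ s, IsLM q (· < ·) (v i) (c i)) (hc : Set.InjOn c s) :
    ∃ i₀ ∈ s, IsLM q (· < ·) (∑ i ∈ s, v i) (c i₀) ∧ ∀ i ∈ s, c i ≤ c i₀ := by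
  classical
  obtain ⟨i₀, hi₀, hmax⟩ := Finset.exists_max_image s c hs
  have hcoeff : ∀ mo : Mon l,
      ((∑ i ∈ s, v i) mo.pos).coeff (q ^ mo.k) = ∑ i ∈ s, (v i mo.pos).coeff (q ^ mo.k) := by
    intro mo
    rw [Finset.sum_apply, finsetSum_coeff]
  refine ⟨i₀, hi₀, ⟨?_, fun mo hmo => le_iff_eq_or_lt.1 ?_⟩, hmax⟩
  · -- the other summands cannot contain `c i₀`, which would force `c i = c i₀`
    rw [MonOf, mem_support_iff, hcoeff, Finset.sum_eq_single_of_mem i₀ hi₀]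
    · exact mem_support_iff.mp (hv i₀ hi₀).1
    · intro i hi hne
      by_contra hi0
      exact hne (hc hi hi₀ (le_antisymm (hmax i hi) ((hv i hi).le (mem_support_iff.mpr hi0))))
  · rw [MonOf, mem_support_iff, hcoeff] at hmo
    obtain ⟨i, hi, hne⟩ := Finset.exists_ne_zero_of_sum_ne_zero hmo
    exact ((hv i hi).le (mem_support_iff.mpr hne)).trans (hmax i hi)

end IsLM

theorem FiniteField.exists_expChar_card_eq_pow (Fq F : Type*) [Field Fq] [Fintype Fq] [Field F]
    [Algebra Fq F] : ∃ p s : ℕ, ExpChar F p ∧ Fintype.card Fq = p ^ s := by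
  obtain ⟨s, hp, hcard⟩ := FiniteField.card Fq (ringChar Fq)
  have := charP_of_injective_algebraMap (algebraMap Fq F).injective (ringChar Fq)
  exact ⟨ringChar Fq, s, ExpChar.prime hp, hcard⟩

theorem stmt14_general {Fq F : Type*} [Field Fq] [Fintype Fq] [Field F] [Algebra Fq F]
    {l : ℕ} (lt : Mon l → Mon l → Prop) (hlt : IsMonOrder lt)
    {ι : Type*} [Fintype ι]
    (B : ι → Fin l → Polynomial F)
    (mb : ι → Mon l) (hmb : ∀ i, IsLM (Fintype.card Fq) lt (B i) (mb i))
    (hmin : Function.Injective fun i => (mb i).pos)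
    (f : Fin l → Polynomial F) (hf0 : f ≠ fun _ => 0)
    (a : ι → Polynomial F) (ha : ∀ i, IsLin (Fintype.card Fq) (a i))
    (hrep : f = fun j => ∑ i, (a i).comp (B i j))
    (d : ι → ℕ) (hd : ∀ i, a i ≠ 0 → (a i).natDegree = Fintype.card Fq ^ d i) :
    ∃ i0, a i0 ≠ 0 ∧
      IsLM (Fintype.card Fq) lt f ⟨d i0 + (mb i0).k, (mb i0).pos⟩ ∧
      ∀ i, a i ≠ 0 →
        (⟨d i + (mb i).k, (mb i).pos⟩ : Mon l) = ⟨d i0 + (mb i0).k, (mb i0).pos⟩ ∨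
        lt ⟨d i + (mb i).k, (mb i).pos⟩ ⟨d i0 + (mb i0).k, (mb i0).pos⟩ := by
  classical
  let := hlt.toLinearOrder
  obtain ⟨p, s, hp, hq⟩ := FiniteField.exists_expChar_card_eq_pow Fq F
  have hq1 : 1 < Fintype.card Fq := Fintype.one_lt_card
  set S := Finset.univ.filter fun i => a i ≠ 0
  have hfS : f = ∑ i ∈ S, fun j => (a i).comp (B i j) := by
    rw [Finset.sum_filter_of_ne, hrep]
    · ext1 j
      rw [Finset.sum_apply]
    · intro i _ hi
      contrapose! hi
      ext1 j
      simp [hi]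
  have hS : S.Nonempty := by
    rw [Finset.nonempty_iff_ne_empty]
    intro hS
    exact hf0 (by rw [hfS, hS, Finset.sum_empty]; rfl)
  obtain ⟨i₀, hi₀, hlm, hmax⟩ := IsLM.sum hS
    (fun i hi => (hmb i).comp hlt hq hq1 (ha i) (hd i (Finset.mem_filter.mp hi).2))
    (fun i _ i' _ hii' => hmin (congrArg Mon.pos hii' :))
  exact ⟨i₀, (Finset.mem_filter.mp hi₀).2, hfS ▸ hlm,
    fun i hi => hmax i (Finset.mem_filter.mpr ⟨Finset.mem_univ i, hi⟩)⟩

/-- Predictable Leading Monomial property: if `B` is a minimal basis (all leading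
positions distinct) of a left submodule `M` of `L_q(x,q^m)^l` and `0 ≠ f ∈ M` is
written as `f = ∑ aᵢ ∘ bᵢ` with `q`-linearized `aᵢ` (where `aᵢ` has `q`-degree `d i`
when nonzero), then the leading monomial of `f` is the maximum, over `i` with
`aᵢ ≠ 0`, of `lm(aᵢ) ∘ lm(bᵢ)`. -/
theorem stmt14 {Fq F : Type*} [Field Fq] [Fintype Fq] [Field F] [Algebra Fq F]
    {l : ℕ} (lt : Mon l → Mon l → Prop) (hlt : IsMonOrder lt)
    {ι : Type*} [Fintype ι]
    (M : Set (Fin l → Polynomial F)) (hM : IsLinSubmodule (Fintype.card Fq) M)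
    (B : ι → Fin l → Polynomial F) (hB : IsBasisOf (Fintype.card Fq) M B)
    (mb : ι → Mon l) (hmb : ∀ i, IsLM (Fintype.card Fq) lt (B i) (mb i))
    (hmin : Function.Injective fun i => (mb i).pos)
    (f : Fin l → Polynomial F) (hf0 : f ≠ fun _ => 0)
    (a : ι → Polynomial F) (ha : ∀ i, IsLin (Fintype.card Fq) (a i))
    (hrep : f = fun j => ∑ i, (a i).comp (B i j))
    (d : ι → ℕ) (hd : ∀ i, a i ≠ 0 → (a i).natDegree = Fintype.card Fq ^ d i) :
    ∃ i0, a i0 ≠ 0 ∧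
      IsLM (Fintype.card Fq) lt f ⟨d i0 + (mb i0).k, (mb i0).pos⟩ ∧
      ∀ i, a i ≠ 0 →
        (⟨d i + (mb i).k, (mb i).pos⟩ : Mon l) = ⟨d i0 + (mb i0).k, (mb i0).pos⟩ ∨
        lt ⟨d i + (mb i).k, (mb i).pos⟩ ⟨d i0 + (mb i0).k, (mb i0).pos⟩ :=
  stmt14_general lt hlt B mb hmb hmin f hf0 a ha hrep d hd
end

section
/- A basis B of a left submodule M of L_q(x,q^m)^l is minimal (no element reducible modulo the others) if and only if the leading positions of the elements of B are pairwise distinct. -/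
open Polynomial

/-- `f` can be reduced modulo the family `G` (in one step): there are shifts
`x^{q^{a i}}` and scalars `b i` such that each used `G i` has leading monomial
matching `lm f = x^{q^{a i}} ∘ lm (G i)` and the leading term of `f` is the
corresponding left combination of the leading terms of the `G i`. -/
def Reducible {F : Type*} [Field F] (q : ℕ) {l : ℕ} (lt : Mon l → Mon l → Prop)
    (f : Fin l → Polynomial F) {ι : Type*} [Fintype ι]
    (G : ι → Fin l → Polynomial F) : Prop :=
  ∃ (mo : Mon l) (mg : ι → Mon l) (a : ι → ℕ) (b : ι → F),
    IsLM q lt f mo ∧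
    (∀ i, b i ≠ 0 →
      IsLM q lt (G i) (mg i) ∧ (mg i).pos = mo.pos ∧ a i + (mg i).k = mo.k) ∧
    (f mo.pos).coeff (q ^ mo.k) =
      ∑ i, b i * ((G i (mg i).pos).coeff (q ^ (mg i).k)) ^ q ^ (a i)

/-!
A leading term `c x^{q^k} e_p` can only be cancelled by a left combination of leading terms
sitting in the same position `p`. So if two basis elements share a leading position, the one
with the larger `q`-degree is reduced by the other, shifted by `x^{q^{k - k'}}` and scaled by
the ratio of leading coefficients; and if all leading positions are distinct, every scalar
in a reduction must vanish, forcing the leading coefficient to be zero.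
-/

section Reduction

variable {F : Type*} [Field F] {q l : ℕ} {lt : Mon l → Mon l → Prop}

theorem IsLM.unique (hlt : IsMonOrder lt) {f : Fin l → F[X]} {mo mo' : Mon l}
    (h : IsLM q lt f mo) (h' : IsLM q lt f mo') : mo' = mo := by
  rcases h.2 mo' h'.1 with h₁ | h₁
  · exact h₁
  rcases h'.2 mo h.1 with h₂ | h₂
  · exact h₂.symm
  exact absurd (hlt.trans _ _ _ h₁ h₂) (hlt.irrefl _)

theorem IsLM.coeff_ne_zero {f : Fin l → F[X]} {mo : Mon l} (h : IsLM q lt f mo) :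
    (f mo.pos).coeff (q ^ mo.k) ≠ 0 :=
  mem_support_iff.mp h.1

theorem reducible_of_isLM_pos_eq {ι : Type*} [Fintype ι] [DecidableEq ι]
    {f : Fin l → F[X]} {G : ι → Fin l → F[X]} {mf mg : Mon l} (j : ι)
    (hf : IsLM q lt f mf) (hg : IsLM q lt (G j) mg) (hpos : mg.pos = mf.pos)
    (hk : mg.k ≤ mf.k) : Reducible q lt f G := by
  set cf := (f mf.pos).coeff (q ^ mf.k)
  set cg := (G j mg.pos).coeff (q ^ mg.k)
  have hcg : cg ^ q ^ (mf.k - mg.k) ≠ 0 := pow_ne_zero _ hg.coeff_ne_zero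
  refine ⟨mf, fun _ => mg, fun _ => mf.k - mg.k,
    Pi.single j (cf / cg ^ q ^ (mf.k - mg.k)), hf, ?_, ?_⟩
  · intro i hi
    obtain rfl : i = j := by_contra fun hij => hi (Pi.single_eq_of_ne hij _)
    exact ⟨hg, hpos, Nat.sub_add_cancel hk⟩
  · rw [Fintype.sum_eq_single j fun i hij => by rw [Pi.single_eq_of_ne hij, zero_mul],
      Pi.single_eq_same, div_mul_cancel₀ _ hcg]

theorem not_reducible_of_isLM_pos_ne (hlt : IsMonOrder lt) {ι : Type*} [Fintype ι]
    {f : Fin l → F[X]} {G : ι → Fin l → F[X]} {mf : Mon l} {mG : ι → Mon l}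
    (hf : IsLM q lt f mf) (hG : ∀ i, IsLM q lt (G i) (mG i)) (hpos : ∀ i, (mG i).pos ≠ mf.pos) :
    ¬ Reducible q lt f G := by
  rintro ⟨mo, mg, a, b, hmo, hused, hcoeff⟩
  obtain rfl := hf.unique hlt hmo
  have hb : ∀ i, b i = 0 := fun i => by_contra fun hbi => by
    obtain ⟨hmg, hmgpos, -⟩ := hused i hbi
    exact hpos i (hmg.unique hlt (hG i) ▸ hmgpos)
  exact hf.coeff_ne_zero (by simp [hcoeff, hb])

end Reduction

theorem stmt15_general {Fq F : Type*} [Fintype Fq] [Field F]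
    {l L : ℕ} (lt : Mon l → Mon l → Prop) (hlt : IsMonOrder lt)
    (B : Fin L → Fin l → Polynomial F)
    (mb : Fin L → Mon l) (hmb : ∀ i, IsLM (Fintype.card Fq) lt (B i) (mb i)) :
    (∀ i, ¬ Reducible (Fintype.card Fq) lt (B i)
        (fun jj : {j : Fin L // j ≠ i} => B jj.val)) ↔
      Function.Injective fun i => (mb i).pos := by
  constructor
  · intro hmin i j hpos
    by_contra hij
    rcases le_total (mb j).k (mb i).k with hk | hk
    · exact hmin i (reducible_of_isLM_pos_eq ⟨j, Ne.symm hij⟩ (hmb i) (hmb j) hpos.symm hk)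
    · exact hmin j (reducible_of_isLM_pos_eq ⟨i, hij⟩ (hmb j) (hmb i) hpos hk)
  · intro hinj i
    exact not_reducible_of_isLM_pos_ne hlt (hmb i) (fun jj => hmb jj.val)
      fun jj h => jj.prop (hinj h)

/-- A basis `B` of a left submodule `M` of `L_q(x,q^m)^l` is minimal (no element is
reducible modulo the others) iff the leading positions of its elements are pairwise
distinct. -/
theorem stmt15 {Fq F : Type*} [Field Fq] [Fintype Fq] [Field F] [Algebra Fq F]
    {l L : ℕ} (lt : Mon l → Mon l → Prop) (hlt : IsMonOrder lt)
    (M : Set (Fin l → Polynomial F)) (hM : IsLinSubmodule (Fintype.card Fq) M)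
    (B : Fin L → Fin l → Polynomial F) (hB : IsBasisOf (Fintype.card Fq) M B)
    (hB0 : ∀ i, B i ≠ fun _ => 0)
    (mb : Fin L → Mon l) (hmb : ∀ i, IsLM (Fintype.card Fq) lt (B i) (mb i)) :
    (∀ i, ¬ Reducible (Fintype.card Fq) lt (B i)
        (fun jj : {j : Fin L // j ≠ i} => B jj.val)) ↔
      Function.Injective fun i => (mb i).pos :=
  stmt15_general lt hlt B mb hmb
end

section
/- Any two minimal bases of the same left submodule of L_q(x,q^m)^l have the same cardinality, and there is a bijection between them matching leading positions and weighted q-degrees of corresponding elements. -/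
open Polynomial

/-- The `(w 0, ..., w (l-1))`-weighted term-over-position monomial order. -/
def wlt {l : ℕ} (w : Fin l → ℕ) (m1 m2 : Mon l) : Prop :=
  m1.k + w m1.pos < m2.k + w m2.pos ∨
  (m1.k + w m1.pos = m2.k + w m2.pos ∧ m1.pos < m2.pos)

/-- `f` has `(w 0, ..., w (l-1))`-weighted `q`-degree `dd`. -/
def WDegIs {F : Type*} [Field F] (q : ℕ) {l : ℕ} (w : Fin l → ℕ)
    (f : Fin l → Polynomial F) (dd : ℕ) : Prop :=
  (∃ mo : Mon l, MonOf q f mo ∧ mo.k + w mo.pos = dd) ∧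
  (∀ mo : Mon l, MonOf q f mo → mo.k + w mo.pos ≤ dd)

/-!
Ordering monomials by the key `(weighted degree, position)` makes `wlt w` a linear order. If
`LM(b) = x^{q^k} e_p` and `a` is linearized of degree `q^T`, then `a ∘ b` has leading monomial
`x^{q^(T+k)} e_p`. When the leading positions of a basis `B` are distinct these shifted monomials
cannot cancel, so every element of the module has a leading monomial lying in the position of
some `LM(B j)`, with weighted degree at least that of `B j`. Applied to `B1` inside the span of `B2`
and conversely, this gives position-preserving maps `ι → κ → ι` that are mutually inverse
(positions are injective), and the two degree inequalities become equalities.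
-/

namespace Mon

variable {l : ℕ}

def wdeg (w : Fin l → ℕ) (m : Mon l) : ℕ := m.k + w m.pos

-- `x^{q^T} ∘ (x^{q^k} e_pos) = x^{q^(T+k)} e_pos`
def shift_s16 (T : ℕ) (m : Mon l) : Mon l := ⟨T + m.k, m.pos⟩

def wkey (w : Fin l → ℕ) (m : Mon l) : ℕ ×ₗ Fin l := toLex (m.wdeg w, m.pos)

variable (w : Fin l → ℕ)

lemma wkey_injective : Function.Injective (wkey w) := by
  rintro ⟨k, p⟩ ⟨k', p'⟩ h
  simp only [wkey, wdeg, toLex_inj, Prod.mk.injEq] at h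
  obtain ⟨hk, rfl⟩ := h
  simp only [mk.injEq, and_true]
  omega

lemma wkey_le_iff {m m' : Mon l} :
    m.wkey w ≤ m'.wkey w ↔ m.wdeg w < m'.wdeg w ∨ m.wdeg w = m'.wdeg w ∧ m.pos ≤ m'.pos :=
  Prod.Lex.toLex_le_toLex

lemma wlt_iff_wkey_lt {m m' : Mon l} : wlt w m m' ↔ m.wkey w < m'.wkey w := by
  rw [wkey, wkey, Prod.Lex.toLex_lt_toLex]
  rfl

lemma eq_or_wlt_iff_wkey_le {m m' : Mon l} : m = m' ∨ wlt w m m' ↔ m.wkey w ≤ m'.wkey w := by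
  rw [le_iff_eq_or_lt, (wkey_injective w).eq_iff, wlt_iff_wkey_lt]

end Mon

section LeadingMonomial

variable {F : Type*} [Field F] {q l : ℕ} {w : Fin l → ℕ}

lemma IsLin.pow_log_natDegree (hq : 1 < q) {g : F[X]} (hg : IsLin q g) (h0 : g ≠ 0) :
    q ^ Nat.log q g.natDegree = g.natDegree := by
  obtain ⟨K, hK⟩ := hg _ (natDegree_mem_support_of_nonzero h0)
  rw [hK, Nat.log_pow hq]

variable {g : Fin l → F[X]} {mo : Mon l}

lemma IsLM.wkey_le (h : IsLM q (wlt w) g mo) {mo' : Mon l} (h' : MonOf q g mo') :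
    mo'.wkey w ≤ mo.wkey w :=
  (Mon.eq_or_wlt_iff_wkey_le w).mp (h.2 mo' h')

lemma IsLM.unique_s16 (h : IsLM q (wlt w) g mo) {mo' : Mon l} (h' : IsLM q (wlt w) g mo') :
    mo = mo' :=
  Mon.wkey_injective w (le_antisymm (h'.wkey_le h.1) (h.wkey_le h'.1))

lemma WDegIs.eq_wdeg {d : ℕ} (hd : WDegIs q w g d) (h : IsLM q (wlt w) g mo) :
    d = mo.wdeg w := by
  obtain ⟨⟨mo', hmo', rfl⟩, hle⟩ := hd
  have hmo'_le := (Mon.wkey_le_iff w).mp (h.wkey_le hmo')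
  have hmo_le := hle mo h.1
  simp only [Mon.wdeg] at hmo'_le hmo_le ⊢
  omega

lemma IsLM.wkey_le_of_ne_zero (hq : 1 < q) (hlin : IsLinVec q g) (h : IsLM q (wlt w) g mo)
    {p : Fin l} (h0 : g p ≠ 0) :
    (⟨Nat.log q (g p).natDegree, p⟩ : Mon l).wkey w ≤ mo.wkey w :=
  h.wkey_le <| by
    rw [MonOf, (hlin p).pow_log_natDegree hq h0]
    exact natDegree_mem_support_of_nonzero h0

lemma IsLM.natDegree_eq (hq : 1 < q) (hlin : IsLinVec q g) (h : IsLM q (wlt w) g mo) :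
    (g mo.pos).natDegree = q ^ mo.k := by
  have hmem : q ^ mo.k ∈ (g mo.pos).support := h.1
  have h0 : g mo.pos ≠ 0 := by rintro h0; simp [h0] at hmem
  have hK := (Mon.wkey_le_iff w).mp (h.wkey_le_of_ne_zero hq hlin h0)
  have hle : q ^ mo.k ≤ q ^ Nat.log q (g mo.pos).natDegree := by
    rw [(hlin _).pow_log_natDegree hq h0]
    exact le_natDegree_of_mem_supp _ hmem
  rw [Nat.pow_le_pow_iff_right hq] at hle
  rw [← (hlin _).pow_log_natDegree hq h0]
  simp only [Mon.wdeg] at hK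
  congr 1
  omega

lemma IsLM.wkey_le_shift_of_coeff_comp (hq : 1 < q) (hlin : IsLinVec q g)
    (h : IsLM q (wlt w) g mo) {a : F[X]} {T : ℕ} (hT : a.natDegree = q ^ T) {e : ℕ} {p : Fin l}
    (hc : (a.comp (g p)).coeff (q ^ e) ≠ 0) :
    (⟨e, p⟩ : Mon l).wkey w ≤ (mo.shift_s16 T).wkey w := by
  have hle : q ^ e ≤ q ^ T * (g p).natDegree := by
    rw [← hT, ← natDegree_comp]
    exact le_natDegree_of_ne_zero hc
  have h0 : g p ≠ 0 := by
    rintro h0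
    rw [h0, natDegree_zero, mul_zero] at hle
    exact (Nat.pow_pos (n := e) (by omega : 0 < q)).ne' (Nat.le_zero.mp hle)
  rw [← (hlin p).pow_log_natDegree hq h0, ← pow_add, Nat.pow_le_pow_iff_right hq] at hle
  have hK := (Mon.wkey_le_iff w).mp (h.wkey_le_of_ne_zero hq hlin h0)
  rw [Mon.wkey_le_iff]
  simp only [Mon.wdeg, Mon.shift_s16] at hK ⊢
  omega

lemma IsLM.coeff_comp_shift_ne_zero (hq : 1 < q) (hlin : IsLinVec q g)
    (h : IsLM q (wlt w) g mo) {a : F[X]} {T : ℕ} (hT : a.natDegree = q ^ T) :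
    (a.comp (g mo.pos)).coeff (q ^ (mo.shift_s16 T).k) ≠ 0 := by
  have hdeg : (a.comp (g mo.pos)).natDegree = q ^ (mo.shift_s16 T).k := by
    rw [natDegree_comp, hT, h.natDegree_eq hq hlin, Mon.shift_s16, pow_add]
  have hne : a.comp (g mo.pos) ≠ 0 :=
    ne_zero_of_natDegree_gt (n := 0) (hdeg ▸ Nat.pow_pos (by omega))
  rw [← hdeg, coeff_natDegree]
  exact leadingCoeff_ne_zero.mpr hne

end LeadingMonomial

section PredictableLeadingMonomial

variable {F : Type*} [Field F] {q l : ℕ} {w : Fin l → ℕ} {κ : Type*} [Fintype κ]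
  {B : κ → Fin l → F[X]} {m : κ → Mon l}

/-- Predictable leading monomial property: since the `LM(B j)` lie in distinct positions, the
shifted monomials `LM(B j).shift (log_q deg aⱼ)` are pairwise distinct, so the largest of them
cannot cancel and is the leading monomial of `∑ aⱼ ∘ B j`. -/
theorem exists_isLM_sum_comp (hq : 1 < q) (hB : ∀ j, IsLinVec q (B j))
    (hm : ∀ j, IsLM q (wlt w) (B j) (m j)) (hmin : Function.Injective fun j => (m j).pos)
    {a : κ → F[X]} (ha : ∀ j, IsLin q (a j)) (ha0 : a ≠ 0) :
    ∃ j, IsLM q (wlt w) (fun p => ∑ j, (a j).comp (B j p))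
      ((m j).shift_s16 (Nat.log q (a j).natDegree)) := by
  classical
  set top : κ → Mon l := fun j => (m j).shift_s16 (Nat.log q (a j).natDegree)
  have hT : ∀ j, a j ≠ 0 → (a j).natDegree = q ^ Nat.log q (a j).natDegree :=
    fun j hj => ((ha j).pow_log_natDegree hq hj).symm
  have hterm : ∀ j e p, ((a j).comp (B j p)).coeff (q ^ e) ≠ 0 →
      a j ≠ 0 ∧ (⟨e, p⟩ : Mon l).wkey w ≤ (top j).wkey w := fun j e p hc => by
    have haj : a j ≠ 0 := by rintro h; simp [h] at hc
    exact ⟨haj, (hm j).wkey_le_shift_of_coeff_comp hq (hB j) (hT j haj) hc⟩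
  set S := Finset.univ.filter (a · ≠ 0)
  have hS : S.Nonempty := by
    obtain ⟨j, hj⟩ := Function.ne_iff.mp ha0
    exact ⟨j, by simpa [S] using hj⟩
  obtain ⟨jm, hjmS, hjmax⟩ := S.exists_max_image (fun j => (top j).wkey w) hS
  have hbound : ∀ mo, MonOf q (fun p => ∑ j, (a j).comp (B j p)) mo →
      mo.wkey w ≤ (top jm).wkey w := by
    intro mo hmo
    rw [MonOf, mem_support_iff, finsetSum_coeff] at hmo
    obtain ⟨j, -, hj⟩ := Finset.exists_ne_zero_of_sum_ne_zero hmo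
    obtain ⟨haj, hle⟩ := hterm j _ _ hj
    exact hle.trans (hjmax j (by simpa [S] using haj))
  have hmem : MonOf q (fun p => ∑ j, (a j).comp (B j p)) (top jm) := by
    rw [MonOf, mem_support_iff, finsetSum_coeff,
      Finset.sum_eq_single_of_mem jm (Finset.mem_univ _)]
    · exact (hm jm).coeff_comp_shift_ne_zero hq (hB jm) (hT jm (by simpa [S] using hjmS))
    refine fun j _ hne => by_contra fun hc => ?_
    obtain ⟨haj, hle⟩ := hterm j _ _ hc
    have htop : top j = top jm :=
      Mon.wkey_injective w (le_antisymm (hjmax j (by simpa [S] using haj)) hle)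
    exact hne (hmin (congrArg Mon.pos htop : (top j).pos = (top jm).pos))
  exact ⟨jm, hmem, fun mo hmo => (Mon.eq_or_wlt_iff_wkey_le w).mpr (hbound mo hmo)⟩

theorem exists_pos_eq_wdeg_le_of_isLM (hq : 1 < q) (hB : ∀ j, IsLinVec q (B j))
    (hm : ∀ j, IsLM q (wlt w) (B j) (m j)) (hmin : Function.Injective fun j => (m j).pos)
    {f : Fin l → F[X]}
    (hf : ∃ a : κ → F[X], (∀ j, IsLin q (a j)) ∧ f = fun p => ∑ j, (a j).comp (B j p))
    {mo : Mon l} (hmo : IsLM q (wlt w) f mo) :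
    ∃ j, mo.pos = (m j).pos ∧ (m j).wdeg w ≤ mo.wdeg w := by
  obtain ⟨a, ha, rfl⟩ := hf
  have ha0 : a ≠ 0 := by
    rintro rfl
    simp [IsLM, MonOf] at hmo
  obtain ⟨j, hj⟩ := exists_isLM_sum_comp hq hB hm hmin ha ha0
  obtain rfl := hmo.unique_s16 hj
  exact ⟨j, rfl, by simp only [Mon.wdeg, Mon.shift_s16]; omega⟩

end PredictableLeadingMonomial

theorem exists_equiv_of_forall_exists_le {α β ι κ : Type*} [PartialOrder β]
    {p₁ : ι → α} {p₂ : κ → α} {d₁ : ι → β} {d₂ : κ → β}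
    (hp₁ : Function.Injective p₁) (hp₂ : Function.Injective p₂)
    (h₁₂ : ∀ i, ∃ j, p₁ i = p₂ j ∧ d₂ j ≤ d₁ i) (h₂₁ : ∀ j, ∃ i, p₂ j = p₁ i ∧ d₁ i ≤ d₂ j) :
    ∃ e : ι ≃ κ, ∀ i, p₁ i = p₂ (e i) ∧ d₁ i = d₂ (e i) := by
  choose φ hφp hφd using h₁₂
  choose ψ hψp hψd using h₂₁
  have hψφ : Function.LeftInverse ψ φ := fun i => hp₁ (by rw [← hψp, ← hφp])
  have hφψ : Function.RightInverse ψ φ := fun j => hp₂ (by rw [← hφp, ← hψp])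
  refine ⟨⟨φ, ψ, hψφ, hφψ⟩, fun i => ⟨hφp i, le_antisymm ?_ (hφd i)⟩⟩
  simpa [hψφ i] using hψd (φ i)

theorem stmt16_general {Fq F : Type*} [Field Fq] [Fintype Fq] [Field F]
    {l : ℕ} (w : Fin l → ℕ) {ι κ : Type*} [Fintype ι] [Fintype κ]
    (M : Set (Fin l → Polynomial F)) (hM : IsLinSubmodule (Fintype.card Fq) M)
    (B1 : ι → Fin l → Polynomial F) (hB1 : IsBasisOf (Fintype.card Fq) M B1)
    (B2 : κ → Fin l → Polynomial F) (hB2 : IsBasisOf (Fintype.card Fq) M B2)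
    (m1 : ι → Mon l) (hm1 : ∀ i, IsLM (Fintype.card Fq) (wlt w) (B1 i) (m1 i))
    (m2 : κ → Mon l) (hm2 : ∀ i, IsLM (Fintype.card Fq) (wlt w) (B2 i) (m2 i))
    (hmin1 : Function.Injective fun i => (m1 i).pos)
    (hmin2 : Function.Injective fun i => (m2 i).pos) :
    ∃ e : ι ≃ κ, ∀ i, (m1 i).pos = (m2 (e i)).pos ∧
      ∀ d1 d2, WDegIs (Fintype.card Fq) w (B1 i) d1 →
        WDegIs (Fintype.card Fq) w (B2 (e i)) d2 → d1 = d2 := by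
  have hq : 1 < Fintype.card Fq := Fintype.one_lt_card
  obtain ⟨e, he⟩ := exists_equiv_of_forall_exists_le hmin1 hmin2
    (d₁ := fun i => (m1 i).wdeg w) (d₂ := fun j => (m2 j).wdeg w)
    (fun i => exists_pos_eq_wdeg_le_of_isLM hq (fun j => hM.1 _ (hB2.1 j)) hm2 hmin2
      (hB2.2.1 _ (hB1.1 i)) (hm1 i))
    (fun j => exists_pos_eq_wdeg_le_of_isLM hq (fun i => hM.1 _ (hB1.1 i)) hm1 hmin1
      (hB1.2.1 _ (hB2.1 j)) (hm2 j))
  refine ⟨e, fun i => ⟨(he i).1, fun d1 d2 hd1 hd2 => ?_⟩⟩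
  rw [hd1.eq_wdeg (hm1 i), hd2.eq_wdeg (hm2 (e i)), (he i).2]

/-- Any two minimal bases (with respect to a weighted term-over-position order) of the
same left submodule of `L_q(x,q^m)^l` have the same cardinality, via a bijection
matching leading positions and weighted `q`-degrees of corresponding elements. -/
theorem stmt16 {Fq F : Type*} [Field Fq] [Fintype Fq] [Field F] [Algebra Fq F]
    {l : ℕ} (w : Fin l → ℕ) {ι κ : Type*} [Fintype ι] [Fintype κ]
    (M : Set (Fin l → Polynomial F)) (hM : IsLinSubmodule (Fintype.card Fq) M)
    (B1 : ι → Fin l → Polynomial F) (hB1 : IsBasisOf (Fintype.card Fq) M B1)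
    (B2 : κ → Fin l → Polynomial F) (hB2 : IsBasisOf (Fintype.card Fq) M B2)
    (m1 : ι → Mon l) (hm1 : ∀ i, IsLM (Fintype.card Fq) (wlt w) (B1 i) (m1 i))
    (m2 : κ → Mon l) (hm2 : ∀ i, IsLM (Fintype.card Fq) (wlt w) (B2 i) (m2 i))
    (hmin1 : Function.Injective fun i => (m1 i).pos)
    (hmin2 : Function.Injective fun i => (m2 i).pos) :
    ∃ e : ι ≃ κ, ∀ i, (m1 i).pos = (m2 (e i)).pos ∧
      ∀ d1 d2, WDegIs (Fintype.card Fq) w (B1 i) d1 →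
        WDegIs (Fintype.card Fq) w (B2 (e i)) d2 → d1 = d2 :=
  stmt16_general w M hM B1 hB1 B2 hB2 m1 hm1 m2 hm2 hmin1 hmin2
end
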